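/- Let C ⊆ ℝ^m be a strongly convex polyhedral cone — the set of all nonnegative linear combinations of finitely many fixed vectors, satisfying C ∩ (−C) = {0} — whose linear span has dimension at least 2. Then every element of C is the sum of two elements of the topological frontier ∂C of C in ℝ^m; consequently C is the smallest convex cone (hence the smallest polyhedral cone) containing ∂C. (Lemma 2.9) -/

import Mathlib

/-!
A finitely generated salient cone is closed, being the cone over the compact convex hull of its
nonzero generators, a hull that avoids `0`. In dimension at least two `ℝᵐ ∖ {0}` is connected, so
it is not covered by the disjoint relatively closed sets `C ∖ {0}` and `-C ∖ {0}`: some `d` has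
`d ∉ C` and `-d ∉ C`. The line `x + ℝ d` through `x ∈ C` then leaves the closed cone `C` in both
directions, hence meets `∂C` at `x + s d` and `x - r d` with `s, r ≥ 0`. If `x ∉ ∂C`, then
`s, r > 0` and `x` is a positive combination of these two points, and `∂C` is stable under
positive scaling.
-/

open Set
open scoped Pointwise

namespace PointedCone

section Module

variable {E : Type*} [AddCommGroup E] [Module ℝ E]

theorem coe_hull_range {ι : Type*} [Fintype ι] (v : ι → E) :
    (hull ℝ (range v) : Set E) = {x | ∃ c : ι → ℝ, (∀ i, 0 ≤ c i) ∧ x = ∑ i, c i • v i} := by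
  ext x
  simp only [SetLike.mem_coe, Submodule.mem_span_range_iff_exists_fun, mem_ofPred_eq]
  constructor
  · rintro ⟨c, rfl⟩
    exact ⟨fun i => c i, fun i => (c i).2, rfl⟩
  · rintro ⟨c, hc, rfl⟩
    exact ⟨fun i => ⟨c i, hc i⟩, rfl⟩

theorem zero_notMem_convexHull {C : PointedCone ℝ E} (hC : (C : ConvexCone ℝ E).Salient)
    {s : Set E} (hs : s ⊆ C) (h0 : (0 : E) ∉ s) : (0 : E) ∉ convexHull ℝ s := by
  rw [mem_convexHull_iff_exists_fintype]
  rintro ⟨ι, _, w, z, hw, hw1, hz, hsum⟩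
  classical
  obtain ⟨j, -, hj⟩ := Finset.exists_ne_zero_of_sum_ne_zero (hw1.symm ▸ one_ne_zero)
  have hmem : w j • z j ∈ C := C.smul_mem (hw j) (hs (hz j))
  have hneg : -(w j • z j) ∈ C := by
    rw [← Finset.add_sum_erase _ _ (Finset.mem_univ j), add_eq_zero_iff_eq_neg'] at hsum
    rw [← hsum]
    exact C.sum_mem fun i _ => C.smul_mem (hw i) (hs (hz i))
  have hne : w j • z j ≠ 0 := smul_ne_zero hj fun h => h0 (h ▸ hz j)
  exact hC _ hmem hne hneg

theorem coe_hull_eq_insert_zero_Ici_smul (s : Set E) :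
    (hull ℝ s : Set E) = insert 0 (Ici (0 : ℝ) • convexHull ℝ (s \ {0})) := by
  have hK : convexHull ℝ (s \ {0}) ⊆ hull ℝ s :=
    convexHull_min (sdiff_subset.trans subset_hull) (hull ℝ s).convex
  refine Subset.antisymm (fun x hx => ?_) ?_
  · set K := convexHull ℝ (s \ {0})
    have key : x = 0 ∨ x ∈ ConvexCone.hull ℝ K := by
      induction hx using Submodule.span_induction with
      | mem y hy =>
        by_cases hy0 : y = 0
        · exact .inl hy0
        · exact .inr (ConvexCone.subset_hull (subset_convexHull ℝ _ ⟨hy, hy0⟩))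
      | zero => exact .inl rfl
      | add y z _ _ hy hz =>
        rcases hy with rfl | hy
        · simpa using hz
        rcases hz with rfl | hz
        · simpa using Or.inr hy
        exact .inr ((ConvexCone.hull ℝ K).add_mem hy hz)
      | smul c y _ hy =>
        rcases hy with rfl | hy
        · exact .inl (smul_zero c)
        rcases c.2.eq_or_lt with hc | hc
        · exact .inl (by rw [show c = 0 from Subtype.ext hc.symm, zero_smul])
        · exact .inr ((ConvexCone.hull ℝ K).smul_mem hc hy)
    rcases key with rfl | hx
    · exact mem_insert _ _
    · obtain ⟨r, hr, y, hy, rfl⟩ := (ConvexCone.mem_hull_of_convex (convex_convexHull ℝ _)).1 hx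
      exact mem_insert_of_mem _ (smul_mem_smul (mem_Ici.2 hr.le) hy)
  · rintro x (rfl | ⟨t, ht, y, hy, rfl⟩)
    · exact (hull ℝ s).zero_mem
    · exact (hull ℝ s).smul_mem ht (hK hy)

end Module

end PointedCone

section Normed

variable {E : Type*} [NormedAddCommGroup E] [NormedSpace ℝ E]

theorem isClosed_Ici_smul_of_isCompact {K : Set E} (hK : IsCompact K) (h0 : (0 : E) ∉ K) :
    IsClosed (Ici (0 : ℝ) • K) := by
  rcases K.eq_empty_or_nonempty with rfl | hKne
  · simp
  obtain ⟨y₀, hy₀, hmin⟩ := hK.exists_isMinOn hKne continuous_norm.continuousOn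
  have hy₀pos : 0 < ‖y₀‖ := norm_pos_iff.2 fun h => h0 (h ▸ hy₀)
  refine isClosed_of_closure_subset fun x hx => ?_
  set R := (‖x‖ + 1) / ‖y₀‖
  have hbounded : Metric.ball 0 (‖x‖ + 1) ∩ Ici (0 : ℝ) • K ⊆ Icc 0 R • K := by
    rintro _ ⟨hball, t, ht, y, hy, rfl⟩
    refine smul_mem_smul ⟨ht, ?_⟩ hy
    rw [le_div_iff₀ hy₀pos]
    calc t * ‖y₀‖ ≤ t * ‖y‖ := mul_le_mul_of_nonneg_left (hmin hy) ht
      _ = ‖t • y‖ := by rw [norm_smul, Real.norm_of_nonneg ht]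
      _ ≤ ‖x‖ + 1 := (mem_ball_zero_iff.1 hball).le
  have hcpt : IsCompact (Icc (0 : ℝ) R • K) := isCompact_Icc.smul_set hK
  have hx' : x ∈ closure (Icc (0 : ℝ) R • K) :=
    closure_mono hbounded (Metric.isOpen_ball.inter_closure ⟨by simp, hx⟩)
  exact smul_subset_smul_right Icc_subset_Ici_self (hcpt.isClosed.closure_eq ▸ hx')

namespace PointedCone

theorem isClosed_hull_of_finite {s : Set E} (hs : s.Finite)
    (hsal : (hull ℝ s : ConvexCone ℝ E).Salient) : IsClosed (hull ℝ s : Set E) := by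
  have h0 : (0 : E) ∉ convexHull ℝ (s \ {0}) :=
    zero_notMem_convexHull hsal (sdiff_subset.trans subset_hull) fun h => h.2 rfl
  rw [coe_hull_eq_insert_zero_Ici_smul, insert_eq]
  exact isClosed_singleton.union
    (isClosed_Ici_smul_of_isCompact (hs.sdiff.isCompact_convexHull ℝ) h0)

theorem exists_notMem_and_neg_notMem (hE : 1 < Module.rank ℝ E) {C : PointedCone ℝ E}
    (hC : IsClosed (C : Set E)) (hsal : (C : ConvexCone ℝ E).Salient) :
    ∃ d : E, d ∉ C ∧ -d ∉ C := by
  have : Nontrivial E := rank_pos_iff_nontrivial.1 (zero_lt_one.trans hE)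
  obtain ⟨e, he⟩ := exists_ne (0 : E)
  have hpm : ∀ y : E, y ≠ 0 → y ∉ C ∨ -y ∉ C := fun y hy => or_iff_not_imp_left.2 fun h =>
    hsal y (not_not.1 h) hy
  have hU : (({0}ᶜ : Set E) ∩ (C : Set E)ᶜ).Nonempty := by
    rcases hpm e he with h | h
    · exact ⟨e, he, h⟩
    · exact ⟨-e, neg_ne_zero.2 he, h⟩
  have hV : (({0}ᶜ : Set E) ∩ (-(C : Set E))ᶜ).Nonempty := by
    rcases hpm e he with h | h
    · exact ⟨-e, neg_ne_zero.2 he, by simpa using h⟩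
    · exact ⟨e, he, h⟩
  have hcover : ({0}ᶜ : Set E) ⊆ (C : Set E)ᶜ ∪ (-(C : Set E))ᶜ := fun y hy => by
    simpa [or_comm] using hpm y hy
  obtain ⟨d, -, hd, hnd⟩ := (isPathConnected_compl_singleton_of_one_lt_rank hE 0).isConnected
    |>.isPreconnected _ _ hC.isOpen_compl hC.neg.isOpen_compl hcover hU hV
  exact ⟨d, hd, hnd⟩

theorem smul_mem_frontier_iff (C : PointedCone ℝ E) {c : ℝ} (hc : 0 < c) {x : E} :
    c • x ∈ frontier (C : Set E) ↔ x ∈ frontier (C : Set E) := by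
  have hC : (c • ·) ⁻¹' (C : Set E) = C := Set.ext fun y => C.smul_mem_iff hc
  have := (Homeomorph.smulOfNeZero c hc.ne').preimage_frontier (C : Set E)
  exact Set.ext_iff.1 (hC ▸ this) x

theorem exists_nonneg_add_smul_mem_frontier {C : PointedCone ℝ E} (hC : IsClosed (C : Set E))
    {x d : E} (hx : x ∈ C) (hd : d ∉ C) : ∃ t : ℝ, 0 ≤ t ∧ x + t • d ∈ frontier (C : Set E) := by
  obtain ⟨r, hr, hrC⟩ : ∃ r : ℝ, 0 < r ∧ r⁻¹ • x + d ∉ C := by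
    have hlim : Filter.Tendsto (fun r : ℝ => r⁻¹ • x + d) Filter.atTop (nhds d) := by
      simpa using ((tendsto_inv_atTop_zero (𝕜 := ℝ)).smul_const x).add_const d
    exact ((Filter.eventually_gt_atTop 0).and
      (hlim.eventually (hC.isOpen_compl.mem_nhds hd))).exists
  have hr' : x + r • d ∉ C := by
    rwa [← C.smul_mem_iff (inv_pos.2 hr), smul_add, inv_smul_smul₀ hr.ne']
  let f : NNReal → E := fun t => x + (t : ℝ) • d
  have hfr : f ⁻¹' C ≠ univ := fun h => hr' (eq_univ_iff_forall.1 h ⟨r, hr.le⟩)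
  obtain ⟨t, ht⟩ := (nonempty_frontier_iff (s := f ⁻¹' C)).2 ⟨⟨0, by simpa [f] using hx⟩, hfr⟩
  exact ⟨t, t.2, (by fun_prop : Continuous f).frontier_preimage_subset _ ht⟩

theorem exists_mem_frontier_add_mem_frontier {C : PointedCone ℝ E} (hC : IsClosed (C : Set E))
    {d : E} (hd : d ∉ C) (hnd : -d ∉ C) {x : E} (hx : x ∈ C) :
    ∃ y ∈ frontier (C : Set E), ∃ z ∈ frontier (C : Set E), x = y + z := by
  by_cases hxf : x ∈ frontier (C : Set E)
  · have hhalf := (C.smul_mem_frontier_iff (c := 1 / 2) (by norm_num)).2 hxf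
    exact ⟨_, hhalf, _, hhalf, by rw [← add_smul]; norm_num⟩
  obtain ⟨s, hs, hp⟩ := exists_nonneg_add_smul_mem_frontier hC hx hd
  obtain ⟨r, hr, hq⟩ := exists_nonneg_add_smul_mem_frontier hC hx hnd
  have hs0 : 0 < s := hs.lt_of_ne fun h => hxf (by simpa [← h] using hp)
  have hr0 : 0 < r := hr.lt_of_ne fun h => hxf (by simpa [← h] using hq)
  refine ⟨(r / (s + r)) • (x + s • d), (C.smul_mem_frontier_iff (by positivity)).2 hp,
    (s / (s + r)) • (x + r • -d), (C.smul_mem_frontier_iff (by positivity)).2 hq, ?_⟩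
  match_scalars <;> field_simp <;> ring

end PointedCone

end Normed

open scoped Pointwise in
/-- Lemma 2.9: a strongly convex polyhedral cone `C ⊆ ℝ^m` whose span has dimension at least `2`
satisfies: every element of `C` is the sum of two elements of the frontier `∂C`; consequently
`C` is the smallest convex cone containing `∂C`. -/
theorem stronglyConvex_polyhedralCone_frontier_generates
    (m k : ℕ) (v : Fin k → (Fin m → ℝ)) (C : Set (Fin m → ℝ))
    (hC : C = {x | ∃ c : Fin k → ℝ, (∀ i, 0 ≤ c i) ∧ x = ∑ i, c i • v i})
    (hsc : C ∩ (-C) = {0})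
    (hdim : 2 ≤ Module.finrank ℝ (Submodule.span ℝ C)) :
    (∀ x ∈ C, ∃ y ∈ frontier C, ∃ z ∈ frontier C, x = y + z) ∧
      ∀ D : ConvexCone ℝ (Fin m → ℝ), frontier C ⊆ ↑D → C ⊆ ↑D := by
  set K := PointedCone.hull ℝ (range v)
  obtain rfl : C = K := hC.trans (PointedCone.coe_hull_range v).symm
  have hsal : (K : ConvexCone ℝ (Fin m → ℝ)).Salient := K.salient_iff_inter_neg_eq_singleton.2 hsc
  have hclosed : IsClosed (K : Set (Fin m → ℝ)) :=
    PointedCone.isClosed_hull_of_finite (finite_range v) hsal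
  have hrank : 1 < Module.rank ℝ (Fin m → ℝ) := by
    rw [← Module.finrank_eq_rank]
    exact_mod_cast hdim.trans (Submodule.finrank_le _)
  obtain ⟨d, hd, hnd⟩ := PointedCone.exists_notMem_and_neg_notMem hrank hclosed hsal
  have hdecomp := fun x (hx : x ∈ K) =>
    PointedCone.exists_mem_frontier_add_mem_frontier hclosed hd hnd hx
  refine ⟨hdecomp, fun D hD x hx => ?_⟩
  obtain ⟨y, hy, z, hz, rfl⟩ := hdecomp x hx
  exact D.add_mem (hD hy) (hD hz)
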